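/- For each integer m ≥ 0 and parameter α, the m-th derivative of ((e^t+1)/2)^{−α} at t = 0 equals Σ_{i=0}^{m} ⟨−α⟩_i · S(m,i)/2^i, where ⟨−α⟩_i is the falling factorial and S(m,i) are Stirling numbers of the second kind. -/

import Mathlib

open Finset

/-- Stirling numbers of the second kind `S(n,k)`. -/
def stirling : ℕ → ℕ → ℕ
  | 0, 0 => 1
  | 0, _ + 1 => 0
  | _ + 1, 0 => 0
  | n + 1, k + 1 => (k + 1) * stirling n (k + 1) + stirling n k

/-- The falling factorial `⟨x⟩_i = x (x-1) ⋯ (x-i+1)`, with `⟨x⟩_0 = 1`. -/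
def fallingFac (x : ℝ) (i : ℕ) : ℝ := ∏ k ∈ Finset.range i, (x - k)

/-- The function `(e^t - 1)/t`, extended by the value `1` at `t = 0`. -/
noncomputable def expm1Div (t : ℝ) : ℝ := if t = 0 then 1 else (Real.exp t - 1) / t

/-- The higher-order Bernoulli polynomial `B_n^{(α)}(x)`, defined via the generating
function `(t/(eᵗ-1))^α e^{xt} = ∑ B_n^{(α)}(x) tⁿ/n!`, i.e. as the `n`-th derivative
of `((eᵗ-1)/t)^{-α} e^{xt}` at `t = 0`. -/
noncomputable def higherBernoulli (n : ℕ) (α x : ℝ) : ℝ :=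
  iteratedDeriv n (fun t => expm1Div t ^ (-α) * Real.exp (x * t)) 0

/-- The higher-order Euler polynomial `E_n^{(α)}(x)`, defined via the generating
function `(2/(eᵗ+1))^α e^{xt} = ∑ E_n^{(α)}(x) tⁿ/n!`. -/
noncomputable def higherEuler (n : ℕ) (α x : ℝ) : ℝ :=
  iteratedDeriv n (fun t => ((Real.exp t + 1) / 2) ^ (-α) * Real.exp (x * t)) 0

/-!
With `w(t) = (eᵗ + 1)/2` we have `w' = eᵗ/2 = (eᵗ/2)'`, so the functions
`fᵢ = ⟨β⟩ᵢ (eᵗ/2)ⁱ w^(β-i)` satisfy `f₀ = w^β` and `fᵢ' = i fᵢ + fᵢ₊₁`. For any such family,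
differentiating `∑ᵢ S(m,i) fᵢ` and regrouping with `S(m+1,i+1) = (i+1) S(m,i+1) + S(m,i)`
gives `∑ᵢ S(m+1,i) fᵢ`, so the `m`-th derivative of `f₀` is `∑ᵢ S(m,i) fᵢ`; finally
`fᵢ(0) = ⟨β⟩ᵢ / 2ⁱ`.
-/

theorem stirling_eq_zero_of_lt : ∀ {n k : ℕ}, n < k → stirling n k = 0
  | 0, _ + 1, _ => rfl
  | n + 1, k + 1, h => by
    rw [stirling, stirling_eq_zero_of_lt (by omega : n < k + 1),
      stirling_eq_zero_of_lt (by omega : n < k), mul_zero]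

theorem sum_range_stirling_succ_mul {R : Type*} [CommSemiring R] (m : ℕ) (a : ℕ → R) :
    ∑ i ∈ range (m + 2), (stirling (m + 1) i : R) * a i =
      ∑ i ∈ range (m + 1), (stirling m i : R) * (i * a i + a (i + 1)) := by
  have hrec : ∀ i, (stirling (m + 1) (i + 1) : R) * a (i + 1) =
      ((i + 1 : ℕ) : R) * stirling m (i + 1) * a (i + 1) + stirling m i * a (i + 1) := by
    intro i; simp only [stirling]; push_cast; ring
  have hshift : ∑ i ∈ range (m + 1), ((i + 1 : ℕ) : R) * stirling m (i + 1) * a (i + 1) =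
      ∑ i ∈ range (m + 1), (i : R) * stirling m i * a i := by
    have h := sum_range_succ' (fun i => (i : R) * stirling m i * a i) (m + 1)
    rw [sum_range_succ, stirling_eq_zero_of_lt (Nat.lt_succ_self m)] at h
    simpa using h.symm
  rw [sum_range_succ', stirling, Nat.cast_zero, zero_mul, add_zero]
  simp only [hrec, sum_add_distrib, hshift, mul_add]
  congr 1
  exact sum_congr rfl fun i _ => by ring

theorem iteratedDeriv_eq_sum_stirling {𝕜 : Type*} [NontriviallyNormedField 𝕜] {f : ℕ → 𝕜 → 𝕜}
    (hf : ∀ i t, HasDerivAt (f i) (i * f i t + f (i + 1) t) t) (m : ℕ) :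
    iteratedDeriv m (f 0) = fun t => ∑ i ∈ range (m + 1), (stirling m i : 𝕜) * f i t := by
  induction m with
  | zero => funext t; simp [stirling]
  | succ m ih =>
    rw [iteratedDeriv_succ, ih]
    funext t
    rw [(HasDerivAt.fun_sum fun i _ => (hf i t).const_mul _).deriv,
      sum_range_stirling_succ_mul]

theorem fallingFac_succ (x : ℝ) (i : ℕ) : fallingFac x (i + 1) = fallingFac x i * (x - i) :=
  prod_range_succ _ _

noncomputable def expAddOneDivTwoTerm (β : ℝ) (i : ℕ) (t : ℝ) : ℝ :=
  fallingFac β i * ((Real.exp t / 2) ^ i * ((Real.exp t + 1) / 2) ^ (β - i))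

theorem hasDerivAt_expAddOneDivTwoTerm (β : ℝ) (i : ℕ) (t : ℝ) :
    HasDerivAt (expAddOneDivTwoTerm β i)
      (i * expAddOneDivTwoTerm β i t + expAddOneDivTwoTerm β (i + 1) t) t := by
  have hexp : HasDerivAt (fun t => Real.exp t / 2) (Real.exp t / 2) t :=
    (Real.hasDerivAt_exp t).div_const 2
  have hw : HasDerivAt (fun t => (Real.exp t + 1) / 2) (Real.exp t / 2) t :=
    ((Real.hasDerivAt_exp t).add_const 1).div_const 2
  have hw_pos : 0 < (Real.exp t + 1) / 2 := by positivity
  have hexponent : β - (i + 1 : ℕ) = β - i - 1 := by push_cast; ring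
  refine (((hexp.fun_pow i).fun_mul (hw.rpow_const (p := β - i) (Or.inl hw_pos.ne'))).const_mul
    (fallingFac β i)).congr_deriv ?_
  rcases i with _ | i
  · simp only [expAddOneDivTwoTerm, fallingFac_succ, hexponent]
    norm_num
    ring
  · simp only [expAddOneDivTwoTerm, fallingFac_succ, hexponent, Nat.add_sub_cancel, pow_succ]
    push_cast
    ring

theorem expAddOneDivTwoTerm_apply_zero (β : ℝ) (i : ℕ) :
    expAddOneDivTwoTerm β i 0 = fallingFac β i / 2 ^ i := by
  rw [expAddOneDivTwoTerm, Real.exp_zero]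
  norm_num [div_pow, div_eq_mul_inv]

theorem iteratedDeriv_expAddOneDivTwo_rpow (m : ℕ) (α : ℝ) :
    iteratedDeriv m (fun t => ((Real.exp t + 1) / 2) ^ (-α)) 0 =
      ∑ i ∈ Finset.range (m + 1), fallingFac (-α) i * (stirling m i : ℝ) / 2 ^ i := by
  have hf₀ : (fun t => ((Real.exp t + 1) / 2) ^ (-α)) = expAddOneDivTwoTerm (-α) 0 := by
    funext t; simp [expAddOneDivTwoTerm, fallingFac]
  rw [hf₀, iteratedDeriv_eq_sum_stirling (hasDerivAt_expAddOneDivTwoTerm (-α)) m]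
  refine sum_congr rfl fun i _ => ?_
  rw [expAddOneDivTwoTerm_apply_zero]
  ring
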